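/- For a bi-directed graph G, the simplicial graph G^s, obtained by dropping all arrowheads at simplicial vertices of G, is a maximal ancestral graph that is Markov equivalent to G. -/

import Mathlib

/-- Possible edge types between an ordered pair of distinct vertices of a
simple mixed graph.  `arrowTo` at `(v, w)` means `v → w`, `arrowFrom` means
`v ← w`, `undir` means `v − w` and `bidir` means `v ↔ w`. -/
inductive EType : Type
  | none | undir | arrowTo | arrowFrom | bidir
deriving DecidableEq

/-- The edge type seen from the reversed ordered pair of vertices. -/
def EType.mirror : EType → EType
  | .none => .none
  | .undir => .undir
  | .arrowTo => .arrowFrom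
  | .arrowFrom => .arrowTo
  | .bidir => .bidir

/-- A simple mixed graph: at most one edge (undirected, directed or
bi-directed) between any two distinct vertices, and no self loops. -/
structure MixedGraph (V : Type) where
  E : V → V → EType
  no_loop : ∀ v, E v v = .none
  symm : ∀ v w, E w v = (E v w).mirror

/-- `(a, b, c)` are three consecutive vertices on the path `p`. -/
def ConsecTriple {V : Type} (p : List V) (a b c : V) : Prop :=
  ∃ l1 l2, p = l1 ++ a :: b :: c :: l2

namespace MixedGraph

variable {V : Type} (G : MixedGraph V)

/-- `v − w` is an edge of `G`. -/
def Undir (v w : V) : Prop := G.E v w = .undir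

/-- `v → w` is an edge of `G`. -/
def Dir (v w : V) : Prop := G.E v w = .arrowTo

/-- `v ↔ w` is an edge of `G`. -/
def Bidir (v w : V) : Prop := G.E v w = .bidir

/-- `v` and `w` are adjacent (joined by some edge). -/
def Adj (v w : V) : Prop := G.E v w ≠ .none

/-- The edge between `a` and `b` has an arrowhead at `b`. -/
def HeadAt (a b : V) : Prop := G.E a b = .arrowTo ∨ G.E a b = .bidir

/-- Closed boundary: `v` together with its adjacent vertices. -/
def Bd (v : V) : Set V := insert v {w | G.Adj v w}

/-- A set of vertices is complete if all of its pairs of distinct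
vertices are adjacent. -/
def Complete (S : Set V) : Prop := ∀ v ∈ S, ∀ w ∈ S, v ≠ w → G.Adj v w

/-- A vertex is simplicial if its closed boundary is complete. -/
def Simplicial (v : V) : Prop := G.Complete (G.Bd v)

/-- `v` is an ancestor of `w`: `v = w` or there is a directed path from
`v` to `w`. -/
def Anc (v w : V) : Prop := Relation.ReflTransGen G.Dir v w

/-- The set of ancestors of vertices in `C`. -/
def anSet (C : Set V) : Set V := {v | ∃ c ∈ C, G.Anc v c}

/-- `G` is an ancestral graph. -/
def Ancestral : Prop :=
  (∀ v w, G.Dir v w → ¬ G.Anc w v) ∧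
  (∀ v w, G.Undir v w → ∀ u, ¬ G.HeadAt u v) ∧
  (∀ v w, G.Bidir v w → ¬ G.Anc v w)

/-- The boundary containment property. -/
def BdContain : Prop :=
  (∀ v w, G.Undir v w → G.Bd v = G.Bd w) ∧
  (∀ v w, G.Dir v w → G.Bd v ⊆ G.Bd w)

/-- `b` is a collider between consecutive neighbours `a` and `c`. -/
def Collider (a b c : V) : Prop := G.HeadAt a b ∧ G.HeadAt c b

/-- A path: a list of distinct vertices, consecutive ones adjacent. -/
def IsPath (p : List V) : Prop := p.Nodup ∧ p.Chain' G.Adj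

/-- `p` is an m-connecting path given `C`: every non-collider on it is
outside `C` and every collider on it is an ancestor of `C`. -/
def IsMConnPath (C : Set V) (p : List V) : Prop :=
  G.IsPath p ∧
  ∀ a b c, ConsecTriple p a b c →
    (G.Collider a b c → b ∈ G.anSet C) ∧ (¬ G.Collider a b c → b ∉ C)

/-- `v` and `w` are m-connected given `C`. -/
def MConn (v w : V) (C : Set V) : Prop :=
  ∃ p, G.IsMConnPath C p ∧ p.head? = some v ∧ p.getLast? = some w

/-- `v` and `w` are m-separated given `C`. -/
def MSep (v w : V) (C : Set V) : Prop := ¬ G.MConn v w C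

/-- A maximal (ancestral) graph: every pair of distinct non-adjacent
vertices is m-separated given some set. -/
def Maximal : Prop :=
  ∀ v w, v ≠ w → ¬ G.Adj v w → ∃ C : Set V, v ∉ C ∧ w ∉ C ∧ G.MSep v w C

/-- `G` is a bi-directed graph. -/
def Bidirected : Prop := ∀ v w, G.E v w = .none ∨ G.E v w = .bidir

/-- `G` is an undirected graph. -/
def UndirectedG : Prop := ∀ v w, G.E v w = .none ∨ G.E v w = .undir

/-- `G` is a directed acyclic graph. -/
def IsDAG : Prop :=
  (∀ v w, G.E v w = .none ∨ G.E v w = .arrowTo ∨ G.E v w = .arrowFrom) ∧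
  (∀ v w, G.Dir v w → ¬ G.Anc w v)

/-- `G` and `H` have the same skeleton. -/
def SameSkeleton (H : MixedGraph V) : Prop := ∀ v w, G.Adj v w ↔ H.Adj v w

/-- `G` and `H` are Markov equivalent: their m-separation relations
coincide. -/
def MarkovEquiv (H : MixedGraph V) : Prop :=
  ∀ v w (C : Set V), v ≠ w → v ∉ C → w ∉ C → (G.MSep v w C ↔ H.MSep v w C)

open Classical in
/-- The edge map obtained from `G` by dropping all arrowheads at
simplicial vertices. -/
noncomputable def dropE (v w : V) : EType :=
  match G.E v w with
  | .none => .none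
  | .undir => .undir
  | .arrowTo => if G.Simplicial w then .undir else .arrowTo
  | .arrowFrom => if G.Simplicial v then .undir else .arrowFrom
  | .bidir =>
      if G.Simplicial v then (if G.Simplicial w then .undir else .arrowTo)
      else (if G.Simplicial w then .arrowFrom else .bidir)

/-- The graph obtained from `G` by dropping all arrowheads at simplicial
vertices; for a bi-directed graph `G` this is the simplicial graph `Gˢ`. -/
noncomputable def drop : MixedGraph V where
  E := G.dropE
  no_loop v := by simp [dropE, G.no_loop]
  symm v w := by
    unfold dropE
    rw [G.symm v w]
    cases h : G.E v w <;>
      simp only [EType.mirror] <;> split_ifs <;> simp_all [EType.mirror]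

open Classical in
/-- The edge map of the minimally oriented graph `G^min_<`: starting from
the simplicial graph, each bi-directed edge `v ↔ w` with `Bd v ⊆ Bd w`
and `v < w` is replaced by `v → w`. -/
noncomputable def gminE [LinearOrder V] (v w : V) : EType :=
  match G.dropE v w with
  | .bidir =>
      if G.Bd v ⊆ G.Bd w ∧ v < w then .arrowTo
      else if G.Bd w ⊆ G.Bd v ∧ w < v then .arrowFrom
      else .bidir
  | e => e

/-- The graph `G^min_<` produced by Algorithm 4.2 from `G` and the total
order on `V`. -/
noncomputable def gmin [LinearOrder V] : MixedGraph V where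
  E := G.gminE
  no_loop v := by
    have h := G.drop.no_loop v
    simp only [drop] at h
    simp [gminE, h]
  symm v w := by
    have h := G.drop.symm v w
    simp only [drop] at h
    unfold gminE
    rw [h]
    cases hE : G.dropE v w <;> simp only [EType.mirror]
    case bidir =>
      by_cases c1 : G.Bd v ⊆ G.Bd w ∧ v < w
      · have c2 : ¬ (G.Bd w ⊆ G.Bd v ∧ w < v) := fun h' => lt_asymm c1.2 h'.2
        simp [c1, c2, EType.mirror]
      · by_cases c2 : G.Bd w ⊆ G.Bd v ∧ w < v
        · simp [c1, c2, EType.mirror]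
        · simp [c1, c2, EType.mirror]

/-- Total number of arrowheads of `G`: the number of directed edges plus
twice the number of bi-directed edges. -/
noncomputable def arr : ℕ :=
  {p : V × V | G.Dir p.1 p.2}.ncard + {p : V × V | G.Bidir p.1 p.2}.ncard

end MixedGraph

/-- `Gm` is a minimally oriented graph for `G`. -/
def MinOriented {V : Type} (G Gm : MixedGraph V) : Prop :=
  Gm.Ancestral ∧ Gm.Maximal ∧ G.MarkovEquiv Gm ∧
  ∀ H : MixedGraph V, H.Ancestral → H.Maximal → G.MarkovEquiv H → Gm.arr ≤ H.arr

/-!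
In a bi-directed graph ancestors are trivial and every inner vertex of a path is a collider, so a
path m-connects given `C` iff its inner vertices lie in `C`. In `Gˢ` directed edges only leave
simplicial vertices, so directed paths have length at most one (whence ancestrality), the
colliders are the non-simplicial inner vertices, and these have no proper ancestors: a path
m-connects given `C` iff its non-simplicial inner vertices are in `C` and its simplicial ones are
not. The two neighbours of a simplicial vertex on a path are adjacent, so simplicial inner
vertices can be bypassed, and a path whose inner vertices are non-simplicial and in `C` connects
in both graphs. For `C = ∅` bypassing all inner vertices of an m-connecting path of `Gˢ` leaves
an edge, which gives maximality.
-/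

def InnerVertex {V : Type} (p : List V) (b : V) : Prop := ∃ a c, ConsecTriple p a b c

section Lists

variable {V : Type} {p q : List V} {a b c : V}

theorem InnerVertex.of_mem (hmem : b ∈ p) (hh : p.head? ≠ some b) (hl : p.getLast? ≠ some b) :
    InnerVertex p b := by
  obtain ⟨s, t, rfl⟩ := List.append_of_mem hmem
  rcases s.eq_nil_or_concat with rfl | ⟨s, a, rfl⟩
  · simp at hh
  rcases t with _ | ⟨c, t⟩
  · simp at hl
  exact ⟨a, c, s, t, by simp⟩

theorem InnerVertex.head?_ne (hp : p.Nodup) (h : InnerVertex p b) : p.head? ≠ some b := by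
  obtain ⟨a, c, l1, l2, rfl⟩ := h
  cases l1 <;> grind

theorem InnerVertex.getLast?_ne (hp : p.Nodup) (h : InnerVertex p b) : p.getLast? ≠ some b := by
  obtain ⟨a, c, l1, l2, rfl⟩ := h
  grind

theorem InnerVertex.mem (h : InnerVertex p b) : b ∈ p := by
  obtain ⟨a, c, l1, l2, rfl⟩ := h
  simp

theorem InnerVertex.of_sublist (hq : q.Nodup) (hsub : q.Sublist p) (hh : q.head? = p.head?)
    (hl : q.getLast? = p.getLast?) (h : InnerVertex q b) : InnerVertex p b :=
  .of_mem (hsub.subset h.mem) (hh ▸ h.head?_ne hq) (hl ▸ h.getLast?_ne hq)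

theorem ConsecTriple.rel {R : V → V → Prop} (hp : p.IsChain R) (h : ConsecTriple p a b c) :
    R a b ∧ R b c := by
  obtain ⟨l1, l2, rfl⟩ := h
  simp only [List.isChain_append_cons_cons, List.isChain_cons_cons] at hp
  exact ⟨hp.2.1, hp.2.2.1⟩

theorem ConsecTriple.ne (hp : p.Nodup) (h : ConsecTriple p a b c) : a ≠ c := by
  obtain ⟨l1, l2, rfl⟩ := h
  grind

end Lists

lemma EType.mirror_eq_none {e : EType} : e.mirror = .none ↔ e = .none := by
  cases e <;> simp [EType.mirror]

namespace MixedGraph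

variable {V : Type} {G : MixedGraph V} {p : List V} {a b c v w : V} {C : Set V}

theorem adj_comm : G.Adj v w ↔ G.Adj w v := by
  simp only [Adj, G.symm w v, ne_eq, EType.mirror_eq_none]

theorem Adj.ne (h : G.Adj v w) : v ≠ w := by
  rintro rfl
  exact h (G.no_loop v)

theorem Simplicial.adj (hb : G.Simplicial b) (hab : G.Adj a b) (hbc : G.Adj b c) (hac : a ≠ c) :
    G.Adj a c :=
  hb a (Or.inr (adj_comm.1 hab)) c (Or.inr hbc) hac

theorem IsPath.bypass {l1 l2 : List V} (hb : G.Simplicial b)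
    (hp : G.IsPath (l1 ++ a :: b :: c :: l2)) : G.IsPath (l1 ++ a :: c :: l2) := by
  obtain ⟨hnodup, hchain : List.IsChain G.Adj _⟩ := hp
  have hac : a ≠ c := ConsecTriple.ne hnodup ⟨l1, l2, rfl⟩
  refine ⟨hnodup.sublist (by simp), show List.IsChain G.Adj _ from ?_⟩
  simp only [List.isChain_append_cons_cons, List.isChain_cons_cons] at hchain ⊢
  exact ⟨hchain.1, hb.adj hchain.2.1 hchain.2.2.1 hac, hchain.2.2.2⟩

theorem IsPath.exists_bypass_simplicial (hp : G.IsPath p) :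
    ∃ q, G.IsPath q ∧ q.head? = p.head? ∧ q.getLast? = p.getLast? ∧
      ∀ b, InnerVertex q b → InnerVertex p b ∧ ¬ G.Simplicial b := by
  induction hn : p.length using Nat.strong_induction_on generalizing p with
  | _ n ih =>
  by_cases h : ∃ l1 a b c l2, p = l1 ++ a :: b :: c :: l2 ∧ G.Simplicial b
  · obtain ⟨l1, a, b, c, l2, rfl, hb⟩ := h
    have hp' := hp.bypass hb
    have hh : (l1 ++ a :: c :: l2).head? = (l1 ++ a :: b :: c :: l2).head? := by simp
    have hl : (l1 ++ a :: c :: l2).getLast? = (l1 ++ a :: b :: c :: l2).getLast? := by simp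
    obtain ⟨q, hq, hqh, hql, hinner⟩ := ih _ (by simp [← hn]) hp' rfl
    refine ⟨q, hq, hqh.trans hh, hql.trans hl, fun x hx => ?_⟩
    obtain ⟨hx', hxs⟩ := hinner x hx
    exact ⟨hx'.of_sublist hp'.1 (by simp) hh hl, hxs⟩
  · refine ⟨p, hp, rfl, rfl, fun b hb => ⟨hb, fun hs => h ?_⟩⟩
    obtain ⟨a, c, l1, l2, rfl⟩ := hb
    exact ⟨l1, a, b, c, l2, rfl, hs⟩

theorem IsPath.adj_of_forall_not_innerVertex (hp : G.IsPath p) (hh : p.head? = some v)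
    (hl : p.getLast? = some w) (hvw : v ≠ w) (hinner : ∀ b, ¬ InnerVertex p b) :
    G.Adj v w := by
  match p, hp with
  | [], _ => simp at hh
  | [x], _ => simp_all
  | [x, y], ⟨_, hchain⟩ =>
    simp only [List.head?_cons, List.getLast?_cons_cons, List.getLast?_singleton,
      Option.some.injEq] at hh hl
    subst hh hl
    exact List.isChain_pair.1 hchain
  | x :: y :: z :: t, _ => exact absurd ⟨x, z, [], t, rfl⟩ (hinner y)

theorem drop_adj : G.drop.Adj v w ↔ G.Adj v w := by
  simp only [Adj, drop, ne_eq, not_iff_not]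
  cases h : G.E v w <;> simp only [dropE, h] <;> split_ifs <;> simp

theorem drop_isPath_iff : G.drop.IsPath p ↔ G.IsPath p := by
  have hadj : G.drop.Adj = G.Adj := by
    ext v w
    exact drop_adj
  rw [IsPath, IsPath, hadj]

theorem Bidirected.adj_iff (hG : G.Bidirected) : G.Adj v w ↔ G.E v w = .bidir := by
  rcases hG v w with h | h <;> simp [Adj, h]

theorem Bidirected.anc_iff (hG : G.Bidirected) : G.Anc v w ↔ v = w := by
  refine ⟨fun h => ?_, fun h => h ▸ .refl⟩
  rcases h.cases_head with h | ⟨x, hx, -⟩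
  · exact h
  · rcases hG v x with h | h <;> simp [Dir, h] at hx

theorem Bidirected.anSet_eq (hG : G.Bidirected) : G.anSet C = C := by
  ext v
  simp [anSet, hG.anc_iff]

theorem Bidirected.drop_dir_iff (hG : G.Bidirected) :
    G.drop.Dir v w ↔ G.Adj v w ∧ G.Simplicial v ∧ ¬ G.Simplicial w := by
  rcases hG v w with h | h
  · simp [Dir, Adj, drop, dropE, h]
  · simp only [Dir, Adj, drop, dropE, h, ne_eq, reduceCtorEq, not_false_eq_true, true_and]
    split_ifs <;> simp_all

theorem Bidirected.drop_undir_iff (hG : G.Bidirected) :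
    G.drop.Undir v w ↔ G.Adj v w ∧ G.Simplicial v ∧ G.Simplicial w := by
  rcases hG v w with h | h
  · simp [Undir, Adj, drop, dropE, h]
  · simp only [Undir, Adj, drop, dropE, h, ne_eq, reduceCtorEq, not_false_eq_true, true_and]
    split_ifs <;> simp_all

theorem Bidirected.drop_bidir_iff (hG : G.Bidirected) :
    G.drop.Bidir v w ↔ G.Adj v w ∧ ¬ G.Simplicial v ∧ ¬ G.Simplicial w := by
  rcases hG v w with h | h
  · simp [Bidir, Adj, drop, dropE, h]
  · simp only [Bidir, Adj, drop, dropE, h, ne_eq, reduceCtorEq, not_false_eq_true, true_and]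
    split_ifs <;> simp_all

theorem Bidirected.drop_headAt_iff (hG : G.Bidirected) :
    G.drop.HeadAt v w ↔ G.Adj v w ∧ ¬ G.Simplicial w := by
  rcases hG v w with h | h
  · simp [HeadAt, Adj, drop, dropE, h]
  · simp only [HeadAt, Adj, drop, dropE, h, ne_eq, reduceCtorEq, not_false_eq_true, true_and]
    split_ifs <;> simp_all

theorem Bidirected.eq_of_drop_anc (hG : G.Bidirected) (hv : ¬ G.Simplicial v)
    (h : G.drop.Anc v w) : v = w := by
  rcases h.cases_head with h | ⟨x, hx, -⟩
  · exact h
  · exact absurd (hG.drop_dir_iff.1 hx).2.1 hv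

theorem Bidirected.drop_ancestral (hG : G.Bidirected) : G.drop.Ancestral := by
  refine ⟨fun v w hvw hwv => ?_, fun v w hvw u hu => ?_, fun v w hvw hvw' => ?_⟩
  · obtain ⟨hadj, -, hw⟩ := hG.drop_dir_iff.1 hvw
    exact hadj.ne (hG.eq_of_drop_anc hw hwv).symm
  · exact (hG.drop_headAt_iff.1 hu).2 (hG.drop_undir_iff.1 hvw).2.1
  · obtain ⟨hadj, hv, -⟩ := hG.drop_bidir_iff.1 hvw
    exact hadj.ne (hG.eq_of_drop_anc hv hvw')

theorem Bidirected.collider (hG : G.Bidirected) (hab : G.Adj a b) (hbc : G.Adj b c) :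
    G.Collider a b c :=
  ⟨.inr (hG.adj_iff.1 hab), .inr (hG.adj_iff.1 (adj_comm.1 hbc))⟩

theorem Bidirected.drop_collider_iff (hG : G.Bidirected) (hab : G.Adj a b) (hbc : G.Adj b c) :
    G.drop.Collider a b c ↔ ¬ G.Simplicial b := by
  simp only [Collider, hG.drop_headAt_iff, hab, adj_comm.1 hbc, true_and, and_self]

theorem Bidirected.isMConnPath_iff (hG : G.Bidirected) :
    G.IsMConnPath C p ↔ G.IsPath p ∧ ∀ b, InnerVertex p b → b ∈ C := by
  refine and_congr_right fun hp => ⟨fun h b ⟨a, c, hb⟩ => ?_, fun h a b c hb => ?_⟩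
  · have hcol := hG.collider (hb.rel hp.2).1 (hb.rel hp.2).2
    simpa only [hG.anSet_eq] using (h a b c hb).1 hcol
  · have hcol := hG.collider (hb.rel hp.2).1 (hb.rel hp.2).2
    exact ⟨fun _ => by rw [hG.anSet_eq]; exact h b ⟨a, c, hb⟩, fun hn => absurd hcol hn⟩

theorem Bidirected.drop_isMConnPath_iff (hG : G.Bidirected) :
    G.drop.IsMConnPath C p ↔
      G.IsPath p ∧ ∀ b, InnerVertex p b → (b ∈ C ↔ ¬ G.Simplicial b) := by
  rw [IsMConnPath, drop_isPath_iff]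
  refine and_congr_right fun hp => ⟨fun h b ⟨a, c, hb⟩ => ?_, fun h a b c hb => ?_⟩
  all_goals
    have hcol := hG.drop_collider_iff (hb.rel hp.2).1 (hb.rel hp.2).2
  · refine ⟨fun hbC hs => (h a b c hb).2 (fun hc => hcol.1 hc hs) hbC, fun hs => ?_⟩
    obtain ⟨x, hx, hanc⟩ := (h a b c hb).1 (hcol.2 hs)
    exact hG.eq_of_drop_anc hs hanc ▸ hx
  · exact ⟨fun hc => ⟨b, (h b ⟨a, c, hb⟩).2 (hcol.1 hc), .refl⟩,
      fun hn hbC => hn (hcol.2 ((h b ⟨a, c, hb⟩).1 hbC))⟩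

theorem Bidirected.drop_mConn_iff (hG : G.Bidirected) : G.drop.MConn v w C ↔ G.MConn v w C := by
  constructor
  · rintro ⟨p, hp, hh, hl⟩
    rw [hG.drop_isMConnPath_iff] at hp
    obtain ⟨q, hq, hqh, hql, hinner⟩ := hp.1.exists_bypass_simplicial
    refine ⟨q, hG.isMConnPath_iff.2 ⟨hq, fun b hb => ?_⟩, hqh.trans hh, hql.trans hl⟩
    exact (hp.2 b (hinner b hb).1).2 (hinner b hb).2
  · rintro ⟨p, hp, hh, hl⟩
    rw [hG.isMConnPath_iff] at hp
    obtain ⟨q, hq, hqh, hql, hinner⟩ := hp.1.exists_bypass_simplicial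
    refine ⟨q, hG.drop_isMConnPath_iff.2 ⟨hq, fun b hb => ?_⟩, hqh.trans hh, hql.trans hl⟩
    exact iff_of_true (hp.2 b (hinner b hb).1) (hinner b hb).2

theorem Bidirected.drop_maximal (hG : G.Bidirected) : G.drop.Maximal := by
  refine fun v w hvw hadj => ⟨∅, id, id, fun ⟨p, hp, hh, hl⟩ => hadj (drop_adj.2 ?_)⟩
  rw [hG.drop_isMConnPath_iff] at hp
  obtain ⟨q, hq, hqh, hql, hinner⟩ := hp.1.exists_bypass_simplicial
  refine hq.adj_of_forall_not_innerVertex (hqh.trans hh) (hql.trans hl) hvw fun b hb => ?_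
  exact (hinner b hb).2 (not_not.1 fun hs => (hp.2 b (hinner b hb).1).2 hs)

end MixedGraph

/-- The simplicial graph `Gˢ` of a bi-directed graph `G`
(obtained by dropping all arrowheads at simplicial vertices) is a maximal
ancestral graph Markov equivalent to `G`. -/
theorem stmt8 {V : Type} (G : MixedGraph V) (hG : G.Bidirected) :
    (G.drop).Ancestral ∧ (G.drop).Maximal ∧ G.MarkovEquiv G.drop :=
  ⟨hG.drop_ancestral, hG.drop_maximal, fun _ _ _ _ _ _ => not_congr hG.drop_mConn_iff.symm⟩
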